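/- arXiv:1810.12530 — 6 statements merged into one kernel-verified Lean document; each statement's English description precedes it below -/
import Mathlib

section
/- Let h be the bounded operator on ℓ²(ℤ,ℂ) defined by (hψ)(n) = −(1/2)(ψ(n−1)+ψ(n+1)). Then the spectrum of h equals the interval [−1,1] (viewed inside ℂ). -/
/-!
Writing `S` for the unitary shift `(Sψ)(n) = ψ(n + 1)` on `ℓ²(ℤ)`, we have `h = -(S* + S)/2`, so
`h` is self-adjoint of norm at most `1` and its spectrum lies in `[-1, 1]`.

Conversely, the plane wave `e^{iθn}` solves `hψ = -cos θ · ψ` pointwise but is not square summable.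
Its truncation to `N` consecutive sites has norm `√N`, while the residual `(-cos θ - h)ψ` lives on
the four sites next to the edges of the box and is bounded there, so `-cos θ` is an approximate
eigenvalue and belongs to the spectrum.
-/

open scoped ENNReal

theorem Memℓp.comp_equiv {α β E : Type*} [NormedAddCommGroup E] {p : ℝ≥0∞} {f : β → E}
    (hf : Memℓp f p) (e : α ≃ β) : Memℓp (f ∘ e) p := by
  rcases p.trichotomy with rfl | rfl | hp
  · rw [memℓp_zero_iff] at hf ⊢
    exact hf.preimage e.injective.injOn
  · rw [memℓp_infty_iff] at hf ⊢
    exact hf.mono (Set.range_comp_subset_range e fun b => ‖f b‖)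
  · rw [memℓp_gen_iff hp] at hf ⊢
    exact e.summable_iff.2 hf

namespace lp

variable {α β E : Type*} [NormedAddCommGroup E] {p : ℝ≥0∞}

section CompEquiv

variable (𝕜 : Type*) [NormedField 𝕜] [NormedSpace 𝕜 E] [Fact (1 ≤ p)]

noncomputable def compEquiv (e : α ≃ β) : lp (fun _ : β => E) p ≃ₗᵢ[𝕜] lp (fun _ : α => E) p where
  toFun f := ⟨f ∘ e, (lp.memℓp f).comp_equiv e⟩
  invFun f := ⟨f ∘ e.symm, (lp.memℓp f).comp_equiv e.symm⟩
  left_inv f := by ext; simp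
  right_inv f := by ext; simp
  map_add' f g := rfl
  map_smul' c f := rfl
  norm_map' f := by
    rcases p.dichotomy with rfl | hp
    · exact e.iSup_comp (g := fun b => ‖f b‖)
    · have hp' : 0 < p.toReal := one_pos.trans_le hp
      rw [lp.norm_eq_tsum_rpow hp', lp.norm_eq_tsum_rpow hp']
      exact congrArg (· ^ (1 / p.toReal)) (e.tsum_eq fun b => ‖f b‖ ^ p.toReal)

@[simp]
theorem compEquiv_apply (e : α ≃ β) (f : lp (fun _ : β => E) p) (a : α) :
    compEquiv 𝕜 e f a = f (e a) :=
  rfl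

@[simp]
theorem compEquiv_symm (e : α ≃ β) :
    (compEquiv 𝕜 e).symm = compEquiv (E := E) (p := p) 𝕜 e.symm :=
  rfl

end CompEquiv

theorem eq_sum_single_of_forall_notMem [DecidableEq α] {f : lp (fun _ : α => E) p}
    {t : Finset α} (hf : ∀ a ∉ t, f a = 0) : f = ∑ a ∈ t, lp.single p a (f a) := by
  ext a
  rw [lp.coeFn_sum, Finset.sum_apply]
  simp only [lp.single_apply, Pi.single_apply, Finset.sum_ite_eq]
  split_ifs with ha
  · rfl
  · exact hf a ha

theorem norm_le_card_mul_of_forall_notMem [Fact (1 ≤ p)] {f : lp (fun _ : α => E) p}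
    {t : Finset α} {M : ℝ} (hf : ∀ a ∉ t, f a = 0) (hM : ∀ a, ‖f a‖ ≤ M) :
    ‖f‖ ≤ t.card * M := by
  classical
  have hp : 0 < p := zero_lt_one.trans_le Fact.out
  calc ‖f‖ = ‖∑ a ∈ t, lp.single p a (f a)‖ := by rw [← eq_sum_single_of_forall_notMem hf]
    _ ≤ ∑ a ∈ t, ‖f a‖ :=
        (norm_sum_le _ _).trans_eq (Finset.sum_congr rfl fun a _ => lp.norm_single hp a _)
    _ ≤ t.card * M := by simpa using Finset.sum_le_card_nsmul t _ M fun a _ => hM a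

end lp

theorem IsSelfAdjoint.spectrum_subset_Icc {A : Type*} [CStarAlgebra A] {a : A}
    (ha : IsSelfAdjoint a) : spectrum ℂ a ⊆ Complex.ofReal '' Set.Icc (-‖a‖) ‖a‖ := by
  intro z hz
  rcases subsingleton_or_nontrivial A with hA | hA
  · simp [spectrum.of_subsingleton] at hz
  have hre := ha.mem_spectrum_eq_re hz
  have hnorm := spectrum.norm_le_norm_of_mem hz
  rw [hre, Complex.norm_real, Real.norm_eq_abs] at hnorm
  exact ⟨z.re, abs_le.mp hnorm, hre.symm⟩

theorem ContinuousLinearMap.mem_spectrum_of_forall_exists_mul_norm_lt {𝕜 E : Type*}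
    [NontriviallyNormedField 𝕜] [NormedAddCommGroup E] [NormedSpace 𝕜 E] (T : E →L[𝕜] E) (z : 𝕜)
    (h : ∀ C : ℝ, ∃ x, C * ‖(algebraMap 𝕜 (E →L[𝕜] E) z - T) x‖ < ‖x‖) :
    z ∈ spectrum 𝕜 T := by
  rintro ⟨u, hu⟩
  obtain ⟨x, hx⟩ := h ‖(↑u⁻¹ : E →L[𝕜] E)‖
  refine hx.not_ge ?_
  calc ‖x‖ = ‖(↑u⁻¹ : E →L[𝕜] E) ((u : E →L[𝕜] E) x)‖ := by
        rw [← mul_apply_eq_comp, u.inv_mul, one_apply_eq_self]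
    _ ≤ _ := by rw [hu]; exact (↑u⁻¹ : E →L[𝕜] E).le_opNorm _

local notation "ℓ²ℤ" => lp (fun _ : ℤ => ℂ) 2

namespace FreeHamiltonian

noncomputable def shift : ℓ²ℤ ≃ₗᵢ[ℂ] ℓ²ℤ := lp.compEquiv ℂ (Equiv.addRight 1)

@[simp]
theorem shift_apply (ψ : ℓ²ℤ) (n : ℤ) : shift ψ n = ψ (n + 1) :=
  rfl

@[simp]
theorem shift_symm_apply (ψ : ℓ²ℤ) (n : ℤ) : shift.symm ψ n = ψ (n - 1) := by
  simp [shift, sub_eq_add_neg]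

theorem star_shift : star (shift : ℓ²ℤ →L[ℂ] ℓ²ℤ) = shift.symm := by
  rw [ContinuousLinearMap.star_eq_adjoint, LinearIsometryEquiv.adjoint_eq_symm]

theorem isSelfAdjoint_smul_star_shift_add_shift :
    IsSelfAdjoint ((-(1/2) : ℂ) • (star (shift : ℓ²ℤ →L[ℂ] ℓ²ℤ) + shift)) :=
  .smul (by simp [isSelfAdjoint_iff]) (.star_add_self _)

theorem norm_smul_star_shift_add_shift_le :
    ‖(-(1/2) : ℂ) • (star (shift : ℓ²ℤ →L[ℂ] ℓ²ℤ) + shift)‖ ≤ 1 :=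
  calc _ ≤ 1/2 * (‖star (shift : ℓ²ℤ →L[ℂ] ℓ²ℤ)‖ + ‖(shift : ℓ²ℤ →L[ℂ] ℓ²ℤ)‖) := by
        rw [norm_smul, show ‖(-(1/2) : ℂ)‖ = 1/2 by norm_num]
        gcongr
        exact norm_add_le _ _
    _ ≤ 1/2 * (1 + 1) := by
        rw [star_shift]; gcongr <;> exact LinearIsometry.norm_toContinuousLinearMap_le _
    _ = 1 := by norm_num

noncomputable def planeWave (θ : ℝ) (n : ℤ) : ℂ := Complex.exp (θ * n * Complex.I)

theorem norm_planeWave (θ : ℝ) (n : ℤ) : ‖planeWave θ n‖ = 1 := by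
  simpa [planeWave] using Complex.norm_exp_ofReal_mul_I (θ * n)

theorem planeWave_sub_one_add_planeWave_add_one (θ : ℝ) (n : ℤ) :
    planeWave θ (n - 1) + planeWave θ (n + 1) = 2 * Real.cos θ * planeWave θ n := by
  rw [Complex.ofReal_cos, Complex.two_cos, add_mul, planeWave, planeWave, planeWave,
    ← Complex.exp_add, ← Complex.exp_add, add_comm]
  push_cast
  congr 2 <;> ring

def boxIndicator (N : ℕ) (n : ℤ) : ℂ := if 0 ≤ n ∧ n < N then 1 else 0

theorem norm_boxIndicator_sub_boxIndicator_le (N : ℕ) (m n : ℤ) :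
    ‖boxIndicator N m - boxIndicator N n‖ ≤ 1 := by
  unfold boxIndicator; split_ifs <;> norm_num

noncomputable def wavePacket (θ : ℝ) (N : ℕ) : ℓ²ℤ :=
  ∑ m ∈ Finset.Ico (0 : ℤ) N, lp.single 2 m (planeWave θ m)

theorem wavePacket_apply (θ : ℝ) (N : ℕ) (n : ℤ) :
    wavePacket θ N n = boxIndicator N n * planeWave θ n := by
  rw [wavePacket, lp.coeFn_sum, Finset.sum_apply]
  simp only [lp.single_apply, Pi.single_apply, Finset.sum_ite_eq, Finset.mem_Ico, boxIndicator,
    ite_mul, one_mul, zero_mul]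

theorem norm_wavePacket (θ : ℝ) (N : ℕ) : ‖wavePacket θ N‖ = √N := by
  have h := lp.norm_sum_single (p := 2) (by norm_num) (planeWave θ) (Finset.Ico (0 : ℤ) N)
  simp only [ENNReal.toReal_ofNat, Real.rpow_two, norm_planeWave, one_pow, Finset.sum_const,
    Int.card_Ico, sub_zero, Int.toNat_natCast, nsmul_eq_mul, mul_one] at h
  rw [wavePacket, ← h, Real.sqrt_sq (norm_nonneg _)]

section Hamiltonian

variable {h : ℓ²ℤ →L[ℂ] ℓ²ℤ}

theorem eq_smul_star_shift_add_shift
    (hh : ∀ (ψ : ℓ²ℤ) (n : ℤ), h ψ n = -(1/2 : ℂ) * (ψ (n - 1) + ψ (n + 1))) :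
    h = (-(1/2) : ℂ) • (star (shift : ℓ²ℤ →L[ℂ] ℓ²ℤ) + shift) := by
  ext ψ n
  rw [hh, star_shift, smul_apply, add_apply, lp.coeFn_smul, lp.coeFn_add, Pi.smul_apply,
    Pi.add_apply]
  simp

theorem residual_wavePacket_apply
    (hh : ∀ (ψ : ℓ²ℤ) (n : ℤ), h ψ n = -(1/2 : ℂ) * (ψ (n - 1) + ψ (n + 1)))
    (θ : ℝ) (N : ℕ) (n : ℤ) :
    ((algebraMap ℂ (ℓ²ℤ →L[ℂ] ℓ²ℤ) (-Real.cos θ) - h) (wavePacket θ N)) n =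
      ((boxIndicator N (n - 1) - boxIndicator N n) * planeWave θ (n - 1) +
        (boxIndicator N (n + 1) - boxIndicator N n) * planeWave θ (n + 1)) / 2 := by
  rw [sub_apply, lp.coeFn_sub, Pi.sub_apply, Algebra.algebraMap_eq_smul_one, smul_apply,
    one_apply_eq_self, lp.coeFn_smul, Pi.smul_apply, hh, wavePacket_apply, wavePacket_apply,
    wavePacket_apply, smul_eq_mul]
  linear_combination (boxIndicator N n / 2) * planeWave_sub_one_add_planeWave_add_one θ n

theorem norm_residual_wavePacket_le
    (hh : ∀ (ψ : ℓ²ℤ) (n : ℤ), h ψ n = -(1/2 : ℂ) * (ψ (n - 1) + ψ (n + 1)))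
    (θ : ℝ) (N : ℕ) :
    ‖(algebraMap ℂ (ℓ²ℤ →L[ℂ] ℓ²ℤ) (-Real.cos θ) - h) (wavePacket θ N)‖ ≤ 4 := by
  set r := (algebraMap ℂ (ℓ²ℤ →L[ℂ] ℓ²ℤ) (-Real.cos θ) - h) (wavePacket θ N)
  have hsupp : ∀ n ∉ ({-1, 0, (N : ℤ) - 1, (N : ℤ)} : Finset ℤ), r n = 0 := by
    intro n hn
    simp only [Finset.mem_insert, Finset.mem_singleton, not_or] at hn
    have hl : boxIndicator N (n - 1) = boxIndicator N n := by
      simp only [boxIndicator, show 0 ≤ n - 1 ∧ n - 1 < N ↔ 0 ≤ n ∧ n < N by omega]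
    have hr : boxIndicator N (n + 1) = boxIndicator N n := by
      simp only [boxIndicator, show 0 ≤ n + 1 ∧ n + 1 < N ↔ 0 ≤ n ∧ n < N by omega]
    rw [residual_wavePacket_apply hh, hl, hr]
    ring
  have hbound : ∀ n, ‖r n‖ ≤ 1 := by
    intro n
    rw [residual_wavePacket_apply hh]
    calc _ ≤ (‖boxIndicator N (n - 1) - boxIndicator N n‖ * ‖planeWave θ (n - 1)‖ +
            ‖boxIndicator N (n + 1) - boxIndicator N n‖ * ‖planeWave θ (n + 1)‖) / 2 := by
          rw [norm_div, Complex.norm_two, ← norm_mul, ← norm_mul]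
          gcongr
          exact norm_add_le _ _
      _ ≤ (1 * 1 + 1 * 1) / 2 := by
          rw [norm_planeWave, norm_planeWave]
          gcongr <;> exact norm_boxIndicator_sub_boxIndicator_le N _ _
      _ = 1 := by norm_num
  calc ‖r‖ ≤ (({-1, 0, (N : ℤ) - 1, (N : ℤ)} : Finset ℤ).card : ℝ) * 1 :=
        lp.norm_le_card_mul_of_forall_notMem hsupp hbound
    _ ≤ 4 := by rw [mul_one]; exact_mod_cast Finset.card_le_four

theorem neg_cos_mem_spectrum
    (hh : ∀ (ψ : ℓ²ℤ) (n : ℤ), h ψ n = -(1/2 : ℂ) * (ψ (n - 1) + ψ (n + 1))) (θ : ℝ) :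
    (-Real.cos θ : ℂ) ∈ spectrum ℂ h := by
  refine h.mem_spectrum_of_forall_exists_mul_norm_lt _ fun C => ?_
  obtain ⟨N, hN⟩ := exists_nat_gt ((|C| * 4) ^ 2)
  refine ⟨wavePacket θ N, ?_⟩
  calc _ ≤ |C| * ‖(algebraMap ℂ (ℓ²ℤ →L[ℂ] ℓ²ℤ) (-Real.cos θ) - h) (wavePacket θ N)‖ := by
        gcongr
        exact le_abs_self C
    _ ≤ |C| * 4 := by
        gcongr
        exact norm_residual_wavePacket_le hh θ N
    _ < ‖wavePacket θ N‖ := by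
        rwa [norm_wavePacket, Real.lt_sqrt (by positivity)]

end Hamiltonian

end FreeHamiltonian

open FreeHamiltonian

/-- The spectrum of the one-particle Hamiltonian
`(hψ)(n) = -(1/2)(ψ(n-1)+ψ(n+1))` on `ℓ²(ℤ,ℂ)` equals the interval `[-1,1] ⊆ ℂ`. -/
theorem stmt1
    (h : lp (fun _ : ℤ => ℂ) 2 →L[ℂ] lp (fun _ : ℤ => ℂ) 2)
    (hh : ∀ (ψ : lp (fun _ : ℤ => ℂ) 2) (n : ℤ),
      h ψ n = -(1/2 : ℂ) * (ψ (n - 1) + ψ (n + 1))) :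
    spectrum ℂ h = Complex.ofReal '' Set.Icc (-1 : ℝ) 1 := by
  have hshift := eq_smul_star_shift_add_shift hh
  refine subset_antisymm ?_ ?_
  · have hnorm : ‖h‖ ≤ 1 := hshift ▸ norm_smul_star_shift_add_shift_le
    calc spectrum ℂ h ⊆ Complex.ofReal '' Set.Icc (-‖h‖) ‖h‖ :=
          (hshift ▸ isSelfAdjoint_smul_star_shift_add_shift).spectrum_subset_Icc
      _ ⊆ _ := Set.image_mono (Set.Icc_subset_Icc (neg_le_neg hnorm) hnorm)
  · rintro _ ⟨x, ⟨hx₁, hx₂⟩, rfl⟩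
    have hmem := neg_cos_mem_spectrum hh (Real.arccos (-x))
    rwa [Real.cos_arccos (by linarith) (by linarith), Complex.ofReal_neg, neg_neg] at hmem
end

section
/- Let h_D be the bounded operator on ℓ²(ℕ,ℂ) defined by (h_Dψ)(0) = −(1/2)ψ(1) and (h_Dψ)(n) = −(1/2)(ψ(n−1)+ψ(n+1)) for n ≥ 1. Then for all f, g ∈ ℓ²(ℕ,ℂ), the inner product ⟨f, exp(it h_D) g⟩ tends to 0 as |t| → ∞. -/
/-!
The sine transform `ψ ↦ ∑ₘ ψ(m) sin((m+1)θ)` turns `h_D` into multiplication by `-cos θ` on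
`[0, π]`. Comparing the exponential series moment by moment,
`⟨δ_m, e^{ith_D} δ_n⟩ = (2/π) ∫₀^π sin((m+1)θ) sin((n+1)θ) e^{-it cos θ} dθ`, and the substitution
`x = cos θ` makes this the Fourier transform of `U_m(x) U_n(x) √(1 - x²)` on `[-1, 1]`, which
vanishes at infinity by the Riemann–Lebesgue lemma. Since `h_D` is self-adjoint, `e^{ith_D}` is
unitary, and a uniformly bounded family that converges weakly to `0` on a Hilbert basis does so
on the whole space.
-/

open Filter Topology Real Submodule
open scoped lp Nat

theorem integral_cos_intCast_mul {k : ℤ} (hk : k ≠ 0) : ∫ θ in (0 : ℝ)..π, cos (k * θ) = 0 := by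
  rw [intervalIntegral.integral_comp_mul_left cos (Int.cast_ne_zero.mpr hk)]
  simp [sin_int_mul_pi]

theorem integral_sin_mul_sin (m n : ℕ) :
    ∫ θ in (0 : ℝ)..π, sin ((m + 1) * θ) * sin ((n + 1) * θ) = if m = n then π / 2 else 0 := by
  have h : ∀ θ : ℝ, sin ((m + 1) * θ) * sin ((n + 1) * θ)
      = (cos (((m : ℤ) - n : ℤ) * θ) - cos (((m : ℤ) + n + 2 : ℤ) * θ)) / 2 := by
    intro θ
    push_cast
    rw [cos_sub_cos, show ((m - n) * θ + (m + n + 2) * θ) / 2 = (m + 1) * θ by ring,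
      show ((m - n) * θ - (m + n + 2) * θ) / 2 = -((n + 1) * θ) by ring, sin_neg]
    ring
  simp_rw [h]
  rw [intervalIntegral.integral_div, intervalIntegral.integral_sub
    (Continuous.intervalIntegrable (by fun_prop) _ _)
    (Continuous.intervalIntegrable (by fun_prop) _ _),
    integral_cos_intCast_mul (by omega : ((m : ℤ) + n + 2) ≠ 0)]
  split_ifs with hmn
  · simp [hmn]
  · rw [integral_cos_intCast_mul (by omega : ((m : ℤ) - n) ≠ 0)]
    simp

theorem integral_sin_smul_comp_cos {E : Type*} [NormedAddCommGroup E]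
    [NormedSpace ℝ E] {f : ℝ → E} (hf : Continuous f) :
    ∫ θ in (0 : ℝ)..π, sin θ • f (cos θ) = ∫ x in (-1 : ℝ)..1, f x := by
  have h := intervalIntegral.integral_deriv_smul_comp (a := 0) (b := π)
    (fun θ _ => hasDerivAt_cos θ) continuous_sin.neg.continuousOn hf
  rw [cos_zero, cos_pi, intervalIntegral.integral_symm (-1 : ℝ) 1] at h
  simpa [neg_smul, intervalIntegral.integral_neg] using h

theorem tendsto_intervalIntegral_mul_exp_cocompact (g : ℝ → ℂ) (a b : ℝ) :
    Tendsto (fun t : ℝ => ∫ x in a..b, g x * Complex.exp (-(t * Complex.I * x)))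
      (cocompact ℝ) (𝓝 0) := by
  wlog hab : a ≤ b generalizing a b
  · simpa [intervalIntegral.integral_symm a b] using (this b a (le_of_not_ge hab)).neg
  have hscale : Tendsto (fun t : ℝ => t / (2 * π)) (cocompact ℝ) (cocompact ℝ) := by
    simpa [div_eq_mul_inv] using
      (Homeomorph.mulRight₀ (2 * π)⁻¹ (by positivity)).isClosedEmbedding.tendsto_cocompact
  refine ((Real.tendsto_integral_exp_smul_cocompact ((Set.Ioc a b).indicator g)).comp
    hscale).congr fun t => ?_
  rw [Function.comp_apply, intervalIntegral.integral_of_le hab,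
    ← MeasureTheory.integral_indicator measurableSet_Ioc]
  congr 1 with x
  by_cases hx : x ∈ Set.Ioc a b
  · simp only [Set.indicator_of_mem hx, Circle.smul_def, Real.fourierChar_apply, smul_eq_mul]
    rw [mul_comm]
    congr 2
    push_cast
    field_simp
  · simp [Set.indicator_of_notMem hx]

theorem hasSum_intervalIntegral_mul_exp {g u : ℝ → ℂ} (hg : Continuous g) (hu : Continuous u)
    (a b : ℝ) :
    HasSum (fun k : ℕ => (∫ x in a..b, g x * u x ^ k) / k !)
      (∫ x in a..b, g x * Complex.exp (u x)) := by
  simp_rw [← intervalIntegral.integral_div, mul_div_assoc]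
  refine intervalIntegral.hasSum_integral_of_dominated_convergence
    (fun k x => ‖g x‖ * (‖u x‖ ^ k / k !))
    (fun k => (by fun_prop : Continuous _).aestronglyMeasurable)
    (fun k => .of_forall fun x _ => by simp) (.of_forall fun x _ => ?_) ?_
    (.of_forall fun x _ => ?_)
  · exact (Real.summable_pow_div_factorial _).mul_left _
  · have h : ∀ x, ∑' k, ‖g x‖ * (‖u x‖ ^ k / k !) = ‖g x‖ * rexp ‖u x‖ := fun x => by
      rw [tsum_mul_left, Real.exp_eq_exp_ℝ, (NormedSpace.expSeries_div_hasSum_exp _).tsum_eq]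
    simp_rw [h]
    exact (by fun_prop : Continuous _).intervalIntegrable _ _
  · rw [Complex.exp_eq_exp_ℂ]
    exact (NormedSpace.expSeries_div_hasSum_exp (u x)).mul_left (g x)

theorem ContinuousLinearMap.tendsto_zero_of_topologicalClosure_span_eq_top {ι 𝕜 𝕜₂ E F : Type*}
    [NontriviallyNormedField 𝕜] [NontriviallyNormedField 𝕜₂] {σ : 𝕜 →+* 𝕜₂} [RingHomIsometric σ]
    [NormedAddCommGroup E] [NormedAddCommGroup F] [NormedSpace 𝕜 E] [NormedSpace 𝕜₂ F]
    {l : Filter ι} {f : ι → E →SL[σ] F} {C : ℝ} (hf : ∀ i, ‖f i‖ ≤ C) {s : Set E}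
    (hs : (span 𝕜 s).topologicalClosure = ⊤) (h : ∀ x ∈ s, Tendsto (f · x) l (𝓝 0)) (x : E) :
    Tendsto (f · x) l (𝓝 0) := by
  have hequi : Equicontinuous ((↑) ∘ f) :=
    (show (∃ C, ∀ i, ‖f i‖ ≤ C) ↔ _ from (NormedSpace.equicontinuous_TFAE f).out 5 1).mp ⟨C, hf⟩
  have hclosed : IsClosed {x | Tendsto (f · x) l (𝓝 0)} :=
    hequi.isClosed_setOfPred_tendsto continuous_const
  have hspan : (span 𝕜 s : Set E) ⊆ {x | Tendsto (f · x) l (𝓝 0)} := fun x hx => by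
    induction hx using span_induction with
    | mem x hx => exact h x hx
    | zero => simpa using tendsto_const_nhds
    | add x y _ _ hx hy => simpa using hx.add hy
    | smul c x _ hx => simpa using hx.const_smul (σ c)
  have := closure_minimal hspan hclosed
  rw [← topologicalClosure_coe, hs] at this
  exact this trivial

theorem HilbertBasis.tendsto_inner_apply_of_tendsto {ι κ 𝕜 E : Type*} [RCLike 𝕜]
    [NormedAddCommGroup E] [InnerProductSpace 𝕜 E] (b : HilbertBasis κ 𝕜 E) {l : Filter ι}
    {U : ι → E →L[𝕜] E} {C : ℝ} (hU : ∀ i, ‖U i‖ ≤ C)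
    (h : ∀ j k, Tendsto (fun i => inner 𝕜 (b j) (U i (b k))) l (𝓝 0)) (x y : E) :
    Tendsto (fun i => inner 𝕜 x (U i y)) l (𝓝 0) := by
  have hx : ∀ k, Tendsto (fun i => inner 𝕜 x (U i (b k))) l (𝓝 0) := fun k =>
    ContinuousLinearMap.tendsto_zero_of_topologicalClosure_span_eq_top
      (f := fun i => innerSLFlip 𝕜 (U i (b k))) (C := C * ‖b k‖)
      (fun i => (ContinuousLinearMap.opNorm_le_bound _ (by positivity) fun z => by
        rw [innerSLFlip_apply_apply, mul_comm]
        exact norm_inner_le_norm z _).trans ((U i).le_of_opNorm_le (hU i) (b k)))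
      b.dense_span (by rintro _ ⟨j, rfl⟩; simpa using h j k) x
  exact ContinuousLinearMap.tendsto_zero_of_topologicalClosure_span_eq_top
    (f := fun i => (innerSL 𝕜 x).comp (U i)) (C := ‖x‖ * C)
    (fun i => ((innerSL 𝕜 x).opNorm_comp_le (U i)).trans (by
      rw [innerSL_apply_norm]; gcongr; exact hU i))
    b.dense_span (by rintro _ ⟨k, rfl⟩; simpa using hx k) y

theorem IsSelfAdjoint.exp_ofReal_mul_I_smul_mem_unitary {A : Type*} [NormedRing A]
    [NormedAlgebra ℂ A] [StarRing A] [ContinuousStar A] [CompleteSpace A] [StarModule ℂ A]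
    {a : A} (ha : IsSelfAdjoint a) (t : ℝ) :
    NormedSpace.exp (((t : ℂ) * Complex.I) • a) ∈ unitary A := by
  let +nondep : NormedAlgebra ℚ A := .restrictScalars ℚ ℂ A
  exact NormedSpace.exp_mem_unitary_of_mem_skewAdjoint
    (IsSelfAdjoint.smul_mem_skewAdjoint (by simp [skewAdjoint.mem_iff]) ha)

/-- The entry `⟨δ_m, h_D^k δ_n⟩`, computed in the sine representation. -/
noncomputable def sineMoment (k m n : ℕ) : ℝ :=
  2 / π * ∫ θ in (0 : ℝ)..π, sin ((m + 1) * θ) * sin ((n + 1) * θ) * (-cos θ) ^ k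

theorem sineMoment_comm (k m n : ℕ) : sineMoment k m n = sineMoment k n m := by
  simp only [sineMoment, mul_comm (sin ((m + 1) * _))]

theorem sineMoment_zero (m n : ℕ) : sineMoment 0 m n = if m = n then 1 else 0 := by
  simp only [sineMoment, pow_zero, mul_one, integral_sin_mul_sin]
  split_ifs
  · field_simp
  · simp

theorem sineMoment_succ_zero (k n : ℕ) : sineMoment (k + 1) 0 n = -(1 / 2) * sineMoment k 1 n := by
  rw [sineMoment, sineMoment, mul_left_comm, ← intervalIntegral.integral_const_mul (-(1 / 2 : ℝ))]
  congr 1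
  refine intervalIntegral.integral_congr fun θ _ => ?_
  push_cast
  rw [pow_succ, zero_add, one_mul, show (1 + 1) * θ = 2 * θ by ring, sin_two_mul]
  ring

theorem sineMoment_succ_succ (k m n : ℕ) :
    sineMoment (k + 1) (m + 1) n = -(1 / 2) * (sineMoment k m n + sineMoment k (m + 2) n) := by
  have h (θ : ℝ) : sin ((m + 1) * θ) + sin ((m + 3) * θ) = 2 * sin ((m + 2) * θ) * cos θ := by
    rw [show (m + 1) * θ = (m + 2) * θ - θ by ring, show (m + 3) * θ = (m + 2) * θ + θ by ring,
      sin_sub, sin_add]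
    ring
  rw [sineMoment, sineMoment, sineMoment, ← mul_add, mul_left_comm,
    ← intervalIntegral.integral_add (Continuous.intervalIntegrable (by fun_prop) _ _)
      (Continuous.intervalIntegrable (by fun_prop) _ _),
    ← intervalIntegral.integral_const_mul (-(1 / 2 : ℝ))]
  congr 1
  refine intervalIntegral.integral_congr fun θ _ => ?_
  push_cast
  rw [pow_succ, show (m + 1 + 1) * θ = (m + 2) * θ by ring,
    show (m + 2 + 1) * θ = (m + 3) * θ by ring]
  linear_combination (sin ((n + 1) * θ) * (-cos θ) ^ k / 2) * h θ

structure IsDirichletLaplacian (h : ℓ²(ℕ, ℂ) →L[ℂ] ℓ²(ℕ, ℂ)) : Prop where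
  apply_zero : ∀ ψ : ℓ²(ℕ, ℂ), h ψ 0 = -(1 / 2 : ℂ) * ψ 1
  apply_of_one_le :
    ∀ (ψ : ℓ²(ℕ, ℂ)) (n : ℕ), 1 ≤ n → h ψ n = -(1 / 2 : ℂ) * (ψ (n - 1) + ψ (n + 1))

namespace IsDirichletLaplacian

variable {h : ℓ²(ℕ, ℂ) →L[ℂ] ℓ²(ℕ, ℂ)}

theorem pow_single_apply (hh : IsDirichletLaplacian h) (k m n : ℕ) :
    (h ^ k) (lp.single 2 n 1) m = sineMoment k m n := by
  induction k generalizing m with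
  | zero =>
    rw [sineMoment_zero, apply_ite ((↑) : ℝ → ℂ)]
    simp [lp.single_apply, Pi.single_apply, eq_comm]
  | succ k ih =>
    rw [pow_succ', mul_apply_eq_comp]
    cases m with
    | zero =>
      rw [hh.apply_zero, ih, sineMoment_succ_zero]
      push_cast
      ring
    | succ m =>
      rw [hh.apply_of_one_le _ _ (by omega), Nat.add_sub_cancel, ih, ih, sineMoment_succ_succ]
      push_cast
      ring

theorem inner_single_pow_single (hh : IsDirichletLaplacian h) (k m n : ℕ) :
    inner ℂ (lp.single 2 m 1) ((h ^ k) (lp.single 2 n 1)) = sineMoment k m n := by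
  rw [lp.inner_single_left, hh.pow_single_apply]
  simp

theorem isSelfAdjoint (hh : IsDirichletLaplacian h) : IsSelfAdjoint h := by
  have coord (v : ℓ²(ℕ, ℂ)) (m : ℕ) : v m = inner ℂ (lp.single 2 m 1) v := by
    simp [lp.inner_single_left]
  have entry (m n : ℕ) : inner ℂ (lp.single 2 m 1) (h (lp.single 2 n 1)) = sineMoment 1 m n := by
    simpa using hh.inner_single_pow_single 1 m n
  rw [ContinuousLinearMap.isSelfAdjoint_iff']
  refine lp.ext_continuousLinearMap (by norm_num) fun n => ContinuousLinearMap.ext_ring ?_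
  ext m
  simp only [ContinuousLinearMap.comp_apply, lp.singleContinuousLinearMap_apply]
  rw [coord, coord (h _), ContinuousLinearMap.adjoint_inner_right, ← inner_conj_symm, entry, entry,
    Complex.conj_ofReal, sineMoment_comm]

theorem inner_single_exp_smul_single (hh : IsDirichletLaplacian h) (z : ℂ) (m n : ℕ) :
    inner ℂ (lp.single 2 m 1) (NormedSpace.exp (z • h) (lp.single 2 n 1))
      = 2 / π * ∫ θ in (0 : ℝ)..π,
          (sin ((m + 1) * θ) * sin ((n + 1) * θ) : ℝ) * Complex.exp (-(z * cos θ)) := by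
  let L : (ℓ²(ℕ, ℂ) →L[ℂ] ℓ²(ℕ, ℂ)) →L[ℂ] ℂ :=
    (innerSL ℂ (lp.single 2 m 1)).comp (ContinuousLinearMap.apply ℂ _ (lp.single 2 n 1))
  have hseries := (NormedSpace.exp_series_hasSum_exp' (𝕂 := ℂ) (z • h)).mapL L
  have hintegral := (hasSum_intervalIntegral_mul_exp
    (g := fun θ => ((sin ((m + 1) * θ) * sin ((n + 1) * θ) : ℝ) : ℂ))
    (u := fun θ => -(z * cos θ)) (by fun_prop) (by fun_prop) 0 π).mul_left (2 / π : ℂ)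
  refine hseries.unique (hintegral.congr_fun fun k => ?_)
  have hpow (θ : ℝ) : ((sin ((m + 1) * θ) * sin ((n + 1) * θ) : ℝ) : ℂ) * (-(z * cos θ)) ^ k
      = z ^ k * ((sin ((m + 1) * θ) * sin ((n + 1) * θ) * (-cos θ) ^ k : ℝ) : ℂ) := by
    push_cast
    ring
  have hL (A : ℓ²(ℕ, ℂ) →L[ℂ] ℓ²(ℕ, ℂ)) : L A = inner ℂ (lp.single 2 m 1) (A (lp.single 2 n 1)) :=
    rfl
  rw [map_smul, smul_pow, map_smul, hL, hh.inner_single_pow_single, sineMoment]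
  simp_rw [hpow]
  rw [intervalIntegral.integral_const_mul, intervalIntegral.integral_ofReal]
  push_cast
  ring

theorem tendsto_inner_single_exp_single (hh : IsDirichletLaplacian h) (m n : ℕ) :
    Tendsto (fun t : ℝ =>
        inner ℂ (lp.single 2 m 1) (NormedSpace.exp (((t : ℂ) * Complex.I) • h) (lp.single 2 n 1)))
      (cocompact ℝ) (𝓝 0) := by
  set q : ℝ → ℝ := fun x =>
    (Polynomial.Chebyshev.U ℝ m).eval x * (Polynomial.Chebyshev.U ℝ n).eval x * √(1 - x ^ 2)
  have hsin (θ : ℝ) (hθ : θ ∈ Set.uIcc 0 π) :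
      sin ((m + 1) * θ) * sin ((n + 1) * θ) = sin θ * q (cos θ) := by
    rw [Set.uIcc_of_le pi_pos.le] at hθ
    have hsqrt : √(1 - cos θ ^ 2) = sin θ := by
      rw [← sin_sq, sqrt_sq (sin_nonneg_of_nonneg_of_le_pi hθ.1 hθ.2)]
    have hU (k : ℕ) := Polynomial.Chebyshev.U_real_cos θ k
    push_cast at hU
    rw [← hU m, ← hU n]
    simp only [q, hsqrt]
    ring
  have hcov (t : ℝ) : ∫ θ in (0 : ℝ)..π,
        (sin ((m + 1) * θ) * sin ((n + 1) * θ) : ℝ) * Complex.exp (-(t * Complex.I * cos θ))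
      = ∫ x in (-1 : ℝ)..1, q x * Complex.exp (-(t * Complex.I * x)) := by
    rw [← integral_sin_smul_comp_cos (by fun_prop)]
    refine intervalIntegral.integral_congr fun θ hθ => ?_
    rw [hsin θ hθ, Complex.real_smul]
    push_cast
    ring
  simp_rw [hh.inner_single_exp_smul_single, hcov]
  simpa using (tendsto_intervalIntegral_mul_exp_cocompact (fun x => (q x : ℂ)) (-1) 1).const_mul
    (2 / π : ℂ)

end IsDirichletLaplacian

/-- For the Dirichlet discrete Laplacian `h_D` on `ℓ²(ℕ,ℂ)`
(`(h_Dψ)(0) = -(1/2)ψ(1)`, `(h_Dψ)(n) = -(1/2)(ψ(n-1)+ψ(n+1))` for `n ≥ 1`), the matrix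
elements `⟨f, e^{ith_D} g⟩` tend to `0` as `|t| → ∞` (the cocompact filter on `ℝ`). -/
theorem stmt7
    (hD : lp (fun _ : ℕ => ℂ) 2 →L[ℂ] lp (fun _ : ℕ => ℂ) 2)
    (hhD0 : ∀ ψ : lp (fun _ : ℕ => ℂ) 2, hD ψ 0 = -(1/2 : ℂ) * ψ 1)
    (hhD : ∀ (ψ : lp (fun _ : ℕ => ℂ) 2) (n : ℕ), 1 ≤ n →
      hD ψ n = -(1/2 : ℂ) * (ψ (n - 1) + ψ (n + 1))) :
    ∀ f g : lp (fun _ : ℕ => ℂ) 2,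
      Tendsto (fun t : ℝ =>
          (inner ℂ f ((NormedSpace.exp (((t : ℂ) * Complex.I) • hD)) g) : ℂ))
        (cocompact ℝ) (nhds 0) := by
  intro f g
  have hh : IsDirichletLaplacian hD := ⟨hhD0, hhD⟩
  have hunit (t : ℝ) := hh.isSelfAdjoint.exp_ofReal_mul_I_smul_mem_unitary t
  have hbasis (i : ℕ) : (default : HilbertBasis ℕ ℂ ℓ²(ℕ, ℂ)) i = lp.single 2 i 1 := by
    rw [← HilbertBasis.repr_symm_single]
    rfl
  refine (default : HilbertBasis ℕ ℂ ℓ²(ℕ, ℂ)).tendsto_inner_apply_of_tendsto (C := 1)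
    (fun t => ?_) (fun m n => ?_) f g
  · exact ContinuousLinearMap.opNorm_le_bound _ zero_le_one fun x => by
      rw [ContinuousLinearMap.norm_map_of_mem_unitary (hunit t), one_mul]
  · simpa only [hbasis] using hh.tendsto_inner_single_exp_single m n
end

section
/- Let n ≥ 1, let H be an n×n Hermitian complex matrix, let β > 0 be real, and let U be an n×n unitary matrix. Then Tr(exp(−βH)·U*HU) ≥ Tr(exp(−βH)·H). Equivalently, for the Gibbs density matrix ρ = exp(−βH)/Tr(exp(−βH)), the extracted work Tr(ρH) − Tr(UρU*·H) is ≤ 0. -/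
/-!
Diagonalize `H = V diag(λ) V*` and put `w i = exp (-β λ i)`. In the eigenbasis of `H` the
conjugate `U* H U` becomes `C diag(λ) C*` for the unitary `C = V* U* V`, so
`Tr(e^{-βH} U* H U) = ∑ i j, w i |C i j|² λ j`, and `P = (|C i j|²)` is doubly stochastic.
Convexity of `x ↦ e^{-βx}` gives `w i - w j ≤ β w i (λ j - λ i)`; averaging against `P` kills
the left side (row and column sums are `1`), leaving
`β (∑ i j, P i j w i λ j - ∑ i, w i λ i) ≥ 0`.
-/

open scoped ComplexOrder
open Matrix Unitary

theorem Real.exp_sub_exp_le_mul_exp (β a b : ℝ) :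
    Real.exp (-β * a) - Real.exp (-β * b) ≤ β * Real.exp (-β * a) * (b - a) := by
  have h := mul_le_mul_of_nonneg_left (Real.add_one_le_exp (-β * (b - a)))
    (Real.exp_pos (-β * a)).le
  rw [← Real.exp_add, show -β * a + -β * (b - a) = -β * b by ring] at h
  linarith

namespace Matrix

variable {ι 𝕜 : Type*} [Fintype ι] [DecidableEq ι] [RCLike 𝕜]

section DoublyStochastic

variable {M : Matrix ι ι ℝ}

theorem sum_sum_mul_sub_eq_zero (hM : M ∈ doublyStochastic ℝ ι) (f : ι → ℝ) :
    ∑ i, ∑ j, M i j * (f i - f j) = 0 := by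
  have hrow : ∑ i, ∑ j, M i j * f i = ∑ i, f i := by
    simp [← Finset.sum_mul, sum_row_of_mem_doublyStochastic hM]
  have hcol : ∑ i, ∑ j, M i j * f j = ∑ j, f j := by
    rw [Finset.sum_comm]
    simp [← Finset.sum_mul, sum_col_of_mem_doublyStochastic hM]
  simp only [mul_sub, Finset.sum_sub_distrib, hrow, hcol, sub_self]

theorem dotProduct_exp_le_dotProduct_mulVec (hM : M ∈ doublyStochastic ℝ ι) (d : ι → ℝ)
    {β : ℝ} (hβ : 0 < β) :
    (fun i => Real.exp (-β * d i)) ⬝ᵥ d ≤ (fun i => Real.exp (-β * d i)) ⬝ᵥ (M *ᵥ d) := by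
  set w : ι → ℝ := fun i => Real.exp (-β * d i)
  have hgap : w ⬝ᵥ (M *ᵥ d) - w ⬝ᵥ d = ∑ i, ∑ j, M i j * (w i * (d j - d i)) := by
    simp only [dotProduct, mulVec, ← Finset.sum_sub_distrib]
    refine Finset.sum_congr rfl fun i _ => ?_
    simp only [Finset.mul_sum, mul_sub, Finset.sum_sub_distrib, ← Finset.sum_mul,
      sum_row_of_mem_doublyStochastic hM, one_mul, sub_left_inj]
    exact Finset.sum_congr rfl fun j _ => by ring
  have hscaled : 0 ≤ β * (w ⬝ᵥ (M *ᵥ d) - w ⬝ᵥ d) := by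
    rw [← sum_sum_mul_sub_eq_zero hM w, hgap, Finset.mul_sum]
    refine Finset.sum_le_sum fun i _ => ?_
    rw [Finset.mul_sum]
    refine Finset.sum_le_sum fun j _ => ?_
    have := mul_le_mul_of_nonneg_left (Real.exp_sub_exp_le_mul_exp β (d i) (d j))
      (nonneg_of_mem_doublyStochastic hM (i := i) (j := j))
    linarith
  linarith [nonneg_of_mul_nonneg_right hscaled hβ]

end DoublyStochastic

theorem map_normSq_mem_doublyStochastic {C : Matrix ι ι 𝕜} (hC : C ∈ unitaryGroup ι 𝕜) :
    C.map (‖·‖ ^ 2) ∈ doublyStochastic ℝ ι := by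
  refine mem_doublyStochastic_iff_sum.mpr ⟨fun i j => by simp, fun i => ?_, fun j => ?_⟩
  · have := congr_fun₂ (mem_unitaryGroup_iff.mp hC) i i
    simp only [mul_apply, star_apply, one_apply_eq, RCLike.star_def, RCLike.mul_conj] at this
    exact_mod_cast this
  · have := congr_fun₂ (mem_unitaryGroup_iff'.mp hC) j j
    simp only [mul_apply, star_apply, one_apply_eq, RCLike.star_def, RCLike.conj_mul] at this
    exact_mod_cast this

theorem trace_diagonal_mul_conj (C : Matrix ι ι 𝕜) (w d : ι → ℝ) :
    (diagonal (RCLike.ofReal ∘ w) * (C * diagonal (RCLike.ofReal ∘ d) * star C)).trace =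
      ((w ⬝ᵥ (C.map (‖·‖ ^ 2) *ᵥ d) : ℝ) : 𝕜) := by
  simp only [trace, diag, mul_apply, diagonal_apply, Function.comp_apply, star_apply,
    RCLike.star_def, ite_mul, zero_mul, Finset.sum_ite_eq, Finset.mem_univ, if_true, mul_ite,
    mul_zero, Finset.sum_ite_eq']
  push_cast [dotProduct, mulVec, Finset.mul_sum, map_apply]
  refine Finset.sum_congr rfl fun i _ => Finset.sum_congr rfl fun j _ => ?_
  rw [← RCLike.mul_conj]
  ring

theorem trace_conjStarAlgAut {R : Type*} [CommRing R] [StarRing R]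
    (u : unitary (Matrix ι ι R)) (A : Matrix ι ι R) :
    (conjStarAlgAut R _ u A).trace = A.trace := by
  simpa [Unitary.star_eq_inv] using trace_units_conj (Unitary.toUnits u) A

theorem exp_conjStarAlgAut (u : unitary (Matrix ι ι 𝕜)) (A : Matrix ι ι 𝕜) :
    NormedSpace.exp (conjStarAlgAut 𝕜 _ u A) = conjStarAlgAut 𝕜 _ u (NormedSpace.exp A) := by
  simpa [← Unitary.star_eq_inv] using exp_units_conj (toUnits u) A

theorem IsHermitian.exp_real_smul {A : Matrix ι ι 𝕜} (hA : A.IsHermitian) (t : ℝ) :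
    NormedSpace.exp ((t : 𝕜) • A) = conjStarAlgAut 𝕜 _ hA.eigenvectorUnitary
      (diagonal fun i => (Real.exp (t * hA.eigenvalues i) : 𝕜)) := by
  conv_lhs => rw [hA.spectral_theorem]
  rw [← map_smul, exp_conjStarAlgAut, ← diagonal_smul, exp_diagonal]
  congr 2 with i
  simp [Real.exp_eq_exp_ℝ, ← RCLike.algebraMap_eq_ofReal, NormedSpace.algebraMap_exp_comm]

theorem IsHermitian.trace_exp_real_smul_nonneg {A : Matrix ι ι 𝕜} (hA : A.IsHermitian)
    (t : ℝ) :
    0 ≤ (NormedSpace.exp ((t : 𝕜) • A)).trace := by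
  rw [hA.exp_real_smul, trace_conjStarAlgAut, trace_diagonal]
  exact Finset.sum_nonneg fun i _ => RCLike.ofReal_nonneg.mpr (Real.exp_pos _).le

theorem IsHermitian.trace_exp_mul_le_trace_exp_mul_conj {H U : Matrix ι ι 𝕜}
    (hH : H.IsHermitian) (hU : U ∈ unitaryGroup ι 𝕜) {β : ℝ} (hβ : 0 < β) :
    (NormedSpace.exp ((-(β : 𝕜)) • H) * H).trace ≤
      (NormedSpace.exp ((-(β : 𝕜)) • H) * (star U * H * U)).trace := by
  set V := hH.eigenvectorUnitary
  set ev := hH.eigenvalues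
  set w : ι → ℝ := fun i => Real.exp (-β * ev i)
  set u : unitary (Matrix ι ι 𝕜) := ⟨U, hU⟩
  set C := star V * star u * V
  have hexp : NormedSpace.exp ((-(β : 𝕜)) • H) =
      conjStarAlgAut 𝕜 _ V (diagonal (RCLike.ofReal ∘ w)) := by
    rw [show -(β : 𝕜) = ((-β : ℝ) : 𝕜) by push_cast; rfl]
    exact hH.exp_real_smul (-β)
  have hconj : star U * H * U = conjStarAlgAut 𝕜 _ V
      (conjStarAlgAut 𝕜 _ C (diagonal (RCLike.ofReal ∘ ev))) := by
    have hVC : V * C = star u * V := by simp [C, ← mul_assoc]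
    rw [← conjStarAlgAut_mul_apply, hVC, conjStarAlgAut_mul_apply, ← hH.spectral_theorem]
    simp [u]
  have hself : (NormedSpace.exp ((-(β : 𝕜)) • H) * H).trace = ((w ⬝ᵥ ev : ℝ) : 𝕜) := by
    rw [show NormedSpace.exp ((-(β : 𝕜)) • H) * H = conjStarAlgAut 𝕜 _ V
        (diagonal (RCLike.ofReal ∘ w) * diagonal (RCLike.ofReal ∘ ev)) by
      rw [map_mul, ← hexp, ← hH.spectral_theorem]]
    rw [trace_conjStarAlgAut, diagonal_mul_diagonal, trace_diagonal]
    push_cast [dotProduct]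
    rfl
  rw [hself, hconj, hexp, ← map_mul, trace_conjStarAlgAut, conjStarAlgAut_apply,
    trace_diagonal_mul_conj, RCLike.ofReal_le_ofReal]
  exact dotProduct_exp_le_dotProduct_mulVec (map_normSq_mem_doublyStochastic C.2) ev hβ

end Matrix

theorem stmt11_general (n : ℕ) (H U : Matrix (Fin n) (Fin n) ℂ)
    (hH : H.IsHermitian) (β : ℝ) (hβ : 0 < β)
    (hU : U ∈ Matrix.unitaryGroup (Fin n) ℂ) :
    (NormedSpace.exp ((-(β : ℂ)) • H) * H).trace ≤
        (NormedSpace.exp ((-(β : ℂ)) • H) * (star U * H * U)).trace ∧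
      ((((NormedSpace.exp ((-(β : ℂ)) • H)).trace)⁻¹ • NormedSpace.exp ((-(β : ℂ)) • H)
            * H).trace -
          (U * (((NormedSpace.exp ((-(β : ℂ)) • H)).trace)⁻¹ •
              NormedSpace.exp ((-(β : ℂ)) • H)) * star U * H).trace) ≤ 0 := by
  have hle := hH.trace_exp_mul_le_trace_exp_mul_conj hU hβ
  refine ⟨hle, ?_⟩
  have hZ : 0 ≤ (NormedSpace.exp ((-(β : ℂ)) • H)).trace := by
    simpa using hH.trace_exp_real_smul_nonneg (-β)
  set ρ := NormedSpace.exp ((-(β : ℂ)) • H)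
  have hcyc : (U * ρ * star U * H).trace = (ρ * (star U * H * U)).trace := by
    rw [Matrix.mul_assoc, trace_mul_comm, ← Matrix.mul_assoc, trace_mul_comm]
  rw [smul_mul_assoc, mul_smul_comm, smul_mul_assoc, smul_mul_assoc, trace_smul, trace_smul,
    smul_eq_mul, smul_eq_mul, hcyc, ← mul_sub]
  exact mul_nonpos_of_nonneg_of_nonpos (inv_nonneg.mpr hZ) (sub_nonpos.mpr hle)

/-- (Second law for Gibbs states, finite dimension.) For an `n×n` Hermitian
matrix `H`, `β > 0`, and a unitary `U`, one has `Tr(e^{-βH} U*HU) ≥ Tr(e^{-βH} H)`;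
equivalently, for the Gibbs state `ρ = e^{-βH}/Tr e^{-βH}`, the extracted work
`Tr(ρH) - Tr(UρU* H)` is `≤ 0`. -/
theorem stmt11 (n : ℕ) (hn : 1 ≤ n) (H U : Matrix (Fin n) (Fin n) ℂ)
    (hH : H.IsHermitian) (β : ℝ) (hβ : 0 < β)
    (hU : U ∈ Matrix.unitaryGroup (Fin n) ℂ) :
    (NormedSpace.exp ((-(β : ℂ)) • H) * H).trace ≤
        (NormedSpace.exp ((-(β : ℂ)) • H) * (star U * H * U)).trace ∧
      ((((NormedSpace.exp ((-(β : ℂ)) • H)).trace)⁻¹ • NormedSpace.exp ((-(β : ℂ)) • H)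
            * H).trace -
          (U * (((NormedSpace.exp ((-(β : ℂ)) • H)).trace)⁻¹ •
              NormedSpace.exp ((-(β : ℂ)) • H)) * star U * H).trace) ≤ 0 :=
  stmt11_general n H U hH β hβ hU
end

section
/- Let n ≥ 1, let H be an n×n Hermitian complex matrix, let β > 0 be real, set Z = Tr(exp(−βH)) and ρ = exp(−βH)/Z, and let U be an n×n unitary matrix. Then Tr(ρH) − Tr(UρU*·H) = −(1/β)·S(UρU*‖ρ), where for positive definite density matrices σ, τ the quantum relative entropy is S(σ‖τ) = Tr(σ(log σ − log τ)) and log is the matrix logarithm defined by functional calculus on positive definite Hermitian matrices. -/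
/-!
Since `ρ = Z⁻¹ e^{-βH}` with `Z > 0`, the functional calculus gives `log ρ = -βH - (log Z) 1`.
Logarithms commute with unitary conjugation, so `log (UρU*) = U (log ρ) U*` and the scalar terms
cancel in `log (UρU*) - log ρ = -β (U H U* - H)`. Finally `Tr (UρU* · U H U*) = Tr (ρ H)` by
cyclicity of the trace.
-/

open scoped ComplexOrder

lemma cfc_unitary_conj {R A : Type*} {p : A → Prop} [CommSemiring R] [StarRing R]
    [MetricSpace R] [IsTopologicalSemiring R] [ContinuousStar R] [Ring A] [StarRing A]
    [TopologicalSpace A] [IsTopologicalRing A] [Algebra R A] [ContinuousFunctionalCalculus R A p]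
    [ContinuousMap.UniqueHom R A] (u : unitary A) (f : R → R) (a : A)
    (hf : ContinuousOn f (spectrum R a) := by cfc_cont_tac) (ha : p a := by cfc_tac)
    (hua : p ((u : A) * a * star (u : A)) := by cfc_tac) :
    cfc f ((u : A) * a * star (u : A)) = u * cfc f a * star (u : A) :=
  (StarAlgHomClass.map_cfc (Unitary.conjStarAlgAut R A u) f a hf
    (by show Continuous fun x => (u : A) * x * star u; fun_prop) ha hua).symm

lemma cfc_log_smul_cfc_exp {A : Type*} [Ring A] [StarRing A] [TopologicalSpace A] [Algebra ℝ A]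
    [ContinuousFunctionalCalculus ℝ A IsSelfAdjoint] [ContinuousMap.UniqueHom ℝ A] {r : ℝ}
    (hr : r ≠ 0) (a : A) (ha : IsSelfAdjoint a := by cfc_tac) :
    cfc Real.log (r • cfc Real.exp a) = algebraMap ℝ A (Real.log r) + a := by
  have hlog : ContinuousOn Real.log ((fun x => r • Real.exp x) '' spectrum ℝ a) :=
    Real.continuousOn_log.mono <| by rintro - ⟨x, -, rfl⟩; simp [hr, Real.exp_ne_zero]
  rw [← cfc_smul r Real.exp a, ← cfc_comp' Real.log (fun x => r • Real.exp x) a hlog]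
  calc cfc (fun x => Real.log (r • Real.exp x)) a = cfc (fun x => Real.log r + x) a :=
        cfc_congr fun x _ => by
          rw [smul_eq_mul, Real.log_mul hr (Real.exp_ne_zero x), Real.log_exp]
    _ = algebraMap ℝ A (Real.log r) + a := by rw [cfc_const_add _ _ _, cfc_id' ℝ a]

namespace Matrix

variable {n 𝕜 : Type*} [Fintype n] [DecidableEq n] [RCLike 𝕜]

-- `NormedSpace.exp` needs no norm, but the library comparison with `cfc` is stated for normed
-- algebras; any matrix norm will do, as it induces the product topology.
lemma IsHermitian.exp_eq_cfc {A : Matrix n n 𝕜} (hA : A.IsHermitian) :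
    NormedSpace.exp A = cfc Real.exp A := by
  let _ := Matrix.linftyOpNormedRing (n := n) (α := 𝕜)
  let _ := Matrix.linftyOpNormedAlgebra (R := ℝ) (n := n) (α := 𝕜)
  exact (@CFC.real_exp_eq_normedSpace_exp _ _ _ _ IsHermitian.instContinuousFunctionalCalculus _
    hA).symm

lemma IsHermitian.posDef_exp {A : Matrix n n 𝕜} (hA : A.IsHermitian) :
    (NormedSpace.exp A).PosDef := by
  open scoped MatrixOrder in
  rw [hA.exp_eq_cfc]
  exact IsStrictlyPositive.posDef <|
    (cfc_isStrictlyPositive_iff Real.exp A).mpr fun x _ => Real.exp_pos x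

lemma IsHermitian.exists_cfc_log_trace_inv_smul_exp [Nonempty n] {A : Matrix n n 𝕜}
    (hA : A.IsHermitian) :
    ∃ c : ℝ, cfc Real.log ((NormedSpace.exp A).trace⁻¹ • NormedSpace.exp A) =
      algebraMap ℝ _ c + A := by
  obtain ⟨z, hz, hZ⟩ := RCLike.pos_iff_exists_ofReal.mp hA.posDef_exp.trace_pos
  refine ⟨Real.log z⁻¹, ?_⟩
  rw [← hZ, ← RCLike.ofReal_inv, ← RCLike.real_smul_eq_coe_smul, hA.exp_eq_cfc,
    cfc_log_smul_cfc_exp (inv_ne_zero hz.ne') A hA.isSelfAdjoint]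

lemma trace_unitary_mul_mul_star (u : unitary (Matrix n n 𝕜)) (M : Matrix n n 𝕜) :
    ((u : Matrix n n 𝕜) * M * star (u : Matrix n n 𝕜)).trace = M.trace := by
  rw [trace_mul_cycle, Unitary.coe_star_mul_self, one_mul]

lemma trace_unitary_conj_mul_sub (u : unitary (Matrix n n 𝕜)) (ρ X : Matrix n n 𝕜) :
    ((u : Matrix n n 𝕜) * ρ * star (u : Matrix n n 𝕜) *
        (u * X * star (u : Matrix n n 𝕜) - X)).trace =
      (ρ * X).trace - (u * ρ * star (u : Matrix n n 𝕜) * X).trace := by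
  have h := map_mul (Unitary.conjStarAlgAut 𝕜 _ u) ρ X
  simp only [Unitary.conjStarAlgAut_apply] at h
  rw [mul_sub, trace_sub, ← h, trace_unitary_mul_mul_star]

end Matrix

/-- (Lemma 3.1 in finite dimension.) For an `n×n` Hermitian matrix `H`,
`β > 0`, the Gibbs density matrix `ρ = e^{-βH}/Z` with `Z = Tr e^{-βH}`, and a unitary `U`,
the extracted work equals minus `1/β` times the quantum relative entropy:
`Tr(ρH) - Tr(UρU* H) = -(1/β) Tr(UρU* (log(UρU*) - log ρ))`. -/
theorem stmt12 (n : ℕ) (hn : 1 ≤ n) (H U : Matrix (Fin n) (Fin n) ℂ)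
    (hH : H.IsHermitian) (β : ℝ) (hβ : 0 < β)
    (hU : U ∈ Matrix.unitaryGroup (Fin n) ℂ)
    (Z : ℂ) (hZ : Z = (NormedSpace.exp ((-(β : ℂ)) • H)).trace)
    (ρ : Matrix (Fin n) (Fin n) ℂ)
    (hρ : ρ = Z⁻¹ • NormedSpace.exp ((-(β : ℂ)) • H))
    (hρPD : ρ.PosDef) (hσPD : (U * ρ * star U).PosDef) :
    (ρ * H).trace - (U * ρ * star U * H).trace =
      -(1 / (β : ℂ)) *
        ((U * ρ * star U) * (hσPD.1.cfc Real.log - hρPD.1.cfc Real.log)).trace := by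
  have : Nonempty (Fin n) := ⟨⟨0, hn⟩⟩
  set A := (-(β : ℂ)) • H
  have hA : A.IsHermitian := (IsSelfAdjoint.neg (Complex.conj_ofReal β)).smul hH
  obtain ⟨c, hlogρ⟩ := hA.exists_cfc_log_trace_inv_smul_exp
  rw [← hZ, ← hρ, hρPD.1.cfc_eq] at hlogρ
  lift U to unitary (Matrix (Fin n) (Fin n) ℂ) using hU
  have hlogσ : hσPD.1.cfc Real.log = algebraMap ℝ _ c +
      (U : Matrix (Fin n) (Fin n) ℂ) * A * star (U : Matrix (Fin n) (Fin n) ℂ) := by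
    have hconj := cfc_unitary_conj U Real.log ρ (Matrix.finite_real_spectrum.continuousOn _)
      hρPD.1 hσPD.1
    rw [← hσPD.1.cfc_eq, hconj, hρPD.1.cfc_eq, hlogρ,
      ← Unitary.conjStarAlgAut_apply (S := ℝ), map_add, AlgHomClass.commutes,
      Unitary.conjStarAlgAut_apply]
  rw [hlogρ, hlogσ, add_sub_add_left_eq_sub, Matrix.trace_unitary_conj_mul_sub]
  have hβ0 : (β : ℂ) ≠ 0 := by exact_mod_cast hβ.ne'
  simp only [A, Matrix.mul_smul, Matrix.trace_smul, smul_eq_mul]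
  field_simp
  ring
end

section
/- Let n ≥ 1 and let A, B be n×n Hermitian complex matrices. Then Tr(exp(A+B)) ≥ Tr(exp(A)) · exp( Tr(exp(A)·B) / Tr(exp(A)) ). -/
open scoped ComplexOrder

/-!
Diagonalize `A = U diag(μ) U*` and let `bᵢ` be the (real) diagonal entries of `U* B U`. Then
`Tr(e^A) = ∑ e^{μᵢ}` and `Tr(e^A B) = ∑ e^{μᵢ} bᵢ`, so Jensen's inequality for `exp` with the weights
`e^{μᵢ}` bounds the left-hand side by `∑ e^{μᵢ + bᵢ}`. The numbers `μᵢ + bᵢ` are the diagonal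
entries of `H = U* (A + B) U`, and the Peierls inequality `exp Hᵢᵢ ≤ (exp H)ᵢᵢ` (Jensen once more,
now over the spectral decomposition of `H`) sums to `∑ e^{μᵢ + bᵢ} ≤ Tr e^H = Tr e^{A+B}`.
-/

theorem Real.sum_mul_exp_div_sum_le {ι : Type*} (s : Finset ι) (w b : ι → ℝ)
    (hw : ∀ i ∈ s, 0 ≤ w i) :
    (∑ i ∈ s, w i) * Real.exp ((∑ i ∈ s, w i * b i) / ∑ i ∈ s, w i) ≤
      ∑ i ∈ s, w i * Real.exp (b i) := by
  rcases (Finset.sum_nonneg hw).eq_or_lt with hW | hW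
  · rw [← hW, zero_mul]
    exact Finset.sum_nonneg fun i hi => mul_nonneg (hw i hi) (Real.exp_pos _).le
  · have jensen := convexOn_exp.map_centerMass_le hw hW (fun i _ => Set.mem_univ (b i))
    simp only [Finset.centerMass, smul_eq_mul] at jensen
    rw [inv_mul_eq_div, inv_mul_eq_div, le_div_iff₀ hW] at jensen
    simpa [inv_mul_eq_div, mul_comm] using jensen

namespace Matrix

variable {ι : Type*} [Fintype ι] [DecidableEq ι]

theorem exp_unitary_conj (U : unitaryGroup ι ℂ) (M : Matrix ι ι ℂ) :
    NormedSpace.exp ((U : Matrix ι ι ℂ) * M * star (U : Matrix ι ι ℂ)) =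
      U * NormedSpace.exp M * star (U : Matrix ι ι ℂ) :=
  exp_units_conj (Unitary.toUnits U) M

theorem trace_exp_star_unitary_conj (U : unitaryGroup ι ℂ) (M : Matrix ι ι ℂ) :
    (NormedSpace.exp (star (U : Matrix ι ι ℂ) * M * U)).trace = (NormedSpace.exp M).trace := by
  have h := exp_unitary_conj (star U) M
  rw [Unitary.coe_star, star_star] at h
  rw [h, trace_mul_cycle, mem_unitaryGroup_iff.mp U.2, Matrix.one_mul]

theorem unitary_mul_diagonal_mul_star_apply_self (V : unitaryGroup ι ℂ) (d : ι → ℝ) (i : ι) :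
    ((V : Matrix ι ι ℂ) * diagonal (fun k => (d k : ℂ)) * star (V : Matrix ι ι ℂ)) i i =
      ((∑ k, Complex.normSq ((V : Matrix ι ι ℂ) i k) * d k : ℝ) : ℂ) := by
  rw [mul_apply, Complex.ofReal_sum]
  refine Finset.sum_congr rfl fun k _ => ?_
  rw [mul_diagonal, star_apply, Complex.star_def, Complex.ofReal_mul,
    Complex.normSq_eq_conj_mul_self]
  ring

theorem sum_normSq_unitary_apply (V : unitaryGroup ι ℂ) (i : ι) :
    ∑ k, Complex.normSq ((V : Matrix ι ι ℂ) i k) = 1 := by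
  have h := congr_fun₂ (mem_unitaryGroup_iff.mp V.2) i i
  simp only [mul_apply, star_apply, one_apply_eq, Complex.star_def, Complex.mul_conj] at h
  exact_mod_cast h

namespace IsHermitian

variable {M : Matrix ι ι ℂ} (hM : M.IsHermitian)
include hM

theorem exp_eq :
    NormedSpace.exp M = (hM.eigenvectorUnitary : Matrix ι ι ℂ) *
      diagonal (fun i => (Real.exp (hM.eigenvalues i) : ℂ)) *
        star (hM.eigenvectorUnitary : Matrix ι ι ℂ) := by
  conv_lhs => rw [hM.spectral_theorem, Unitary.conjStarAlgAut_apply]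
  rw [exp_unitary_conj, exp_diagonal]
  congr
  funext i
  simp [← Complex.exp_eq_exp_ℂ]

theorem trace_exp :
    (NormedSpace.exp M).trace = ((∑ i, Real.exp (hM.eigenvalues i) : ℝ) : ℂ) := by
  rw [hM.exp_eq, trace_mul_cycle, mem_unitaryGroup_iff'.mp hM.eigenvectorUnitary.2,
    Matrix.one_mul, trace_diagonal, Complex.ofReal_sum]

theorem exp_re_apply_self_le_re_exp_apply_self (i : ι) :
    Real.exp (M i i).re ≤ (NormedSpace.exp M i i).re := by
  set U := hM.eigenvectorUnitary
  set w : ι → ℝ := fun k => Complex.normSq ((U : Matrix ι ι ℂ) i k)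
  have hM_ii : (M i i).re = ∑ k, w k * hM.eigenvalues k := by
    conv_lhs => rw [hM.spectral_theorem, Unitary.conjStarAlgAut_apply]
    exact congrArg Complex.re (unitary_mul_diagonal_mul_star_apply_self U _ i)
  have hexpM_ii : (NormedSpace.exp M i i).re = ∑ k, w k * Real.exp (hM.eigenvalues k) := by
    rw [hM.exp_eq, unitary_mul_diagonal_mul_star_apply_self, Complex.ofReal_re]
  rw [hM_ii, hexpM_ii]
  simpa using convexOn_exp.map_sum_le (fun k _ => Complex.normSq_nonneg _)
    (sum_normSq_unitary_apply U i) (fun k _ => Set.mem_univ (hM.eigenvalues k))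

theorem sum_exp_re_diag_le_trace_exp :
    ((∑ i, Real.exp (M i i).re : ℝ) : ℂ) ≤ (NormedSpace.exp M).trace := by
  have htrace_re : ∑ i, Real.exp (hM.eigenvalues i) = ∑ i, (NormedSpace.exp M i i).re := by
    rw [← Complex.re_sum, ← Complex.ofReal_re (∑ i, Real.exp _), ← hM.trace_exp, trace]
    rfl
  rw [hM.trace_exp, Complex.real_le_real, htrace_re]
  exact Finset.sum_le_sum fun i _ => hM.exp_re_apply_self_le_re_exp_apply_self i

end IsHermitian
end Matrix

open Matrix in
theorem stmt15_general (n : ℕ) (A B : Matrix (Fin n) (Fin n) ℂ)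
    (hA : A.IsHermitian) (hB : B.IsHermitian) :
    (NormedSpace.exp A).trace *
        Complex.exp ((NormedSpace.exp A * B).trace / (NormedSpace.exp A).trace) ≤
      (NormedSpace.exp (A + B)).trace := by
  set U := hA.eigenvectorUnitary
  set μ := hA.eigenvalues
  set C := star (U : Matrix (Fin n) (Fin n) ℂ) * B * U with hC_def
  set H := star (U : Matrix (Fin n) (Fin n) ℂ) * (A + B) * U with hH_def
  have hH : H.IsHermitian := isHermitian_conjTranspose_mul_mul _ (hA.add hB)
  have hC_diag : ∀ i, C i i = ((C i i).re : ℂ) :=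
    fun i => ((isHermitian_conjTranspose_mul_mul _ hB).coe_re_apply_self i).symm
  have hH_diag : ∀ i, (H i i).re = μ i + (C i i).re := by
    have hH_eq : H = diagonal (fun i => (μ i : ℂ)) + C := by
      rw [hH_def, Matrix.mul_add, Matrix.add_mul, ← Unitary.conjStarAlgAut_star_apply (S := ℂ),
        hA.conjStarAlgAut_star_eigenvectorUnitary]
      rfl
    simp [hH_eq]
  have htrace_AB :
      (NormedSpace.exp A * B).trace = ((∑ i, Real.exp (μ i) * (C i i).re : ℝ) : ℂ) := by
    rw [hA.exp_eq, Matrix.mul_assoc, Matrix.mul_assoc, trace_mul_comm, Matrix.mul_assoc,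
      ← hC_def, trace]
    push_cast
    refine Finset.sum_congr rfl fun i _ => ?_
    rw [diag_apply, diagonal_mul, ← hC_diag]
  rw [hA.trace_exp, htrace_AB, ← trace_exp_star_unitary_conj U]
  calc _ = ((_ * Real.exp (_ / _) : ℝ) : ℂ) := by push_cast; rfl
    _ ≤ ((∑ i, Real.exp (μ i) * Real.exp (C i i).re : ℝ) : ℂ) :=
        Complex.real_le_real.mpr <|
          Real.sum_mul_exp_div_sum_le _ _ _ fun i _ => (Real.exp_pos _).le
    _ = ((∑ i, Real.exp (H i i).re : ℝ) : ℂ) := by simp only [hH_diag, Real.exp_add]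
    _ ≤ _ := hH.sum_exp_re_diag_le_trace_exp

/-- (Peierls–Bogoliubov inequality.) For `n×n` Hermitian matrices `A, B`,
`Tr(e^{A+B}) ≥ Tr(e^A) · exp(Tr(e^A B)/Tr(e^A))`. -/
theorem stmt15 (n : ℕ) (hn : 1 ≤ n) (A B : Matrix (Fin n) (Fin n) ℂ)
    (hA : A.IsHermitian) (hB : B.IsHermitian) :
    (NormedSpace.exp A).trace *
        Complex.exp ((NormedSpace.exp A * B).trace / (NormedSpace.exp A).trace) ≤
      (NormedSpace.exp (A + B)).trace :=
  stmt15_general n A B hA hB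
end

section
/- Let n ≥ 1 and let A, B be n×n Hermitian complex matrices. Then Tr(exp(A+B)) ≤ Tr(exp(A)·exp(B)). -/
/-!
By the Lie product formula, `exp (A + B)` is the limit of `(exp (A / 2ᵏ) * exp (B / 2ᵏ)) ^ 2ᵏ`.
For Hermitian `P` and `Q` one has `Re Tr ((P * Q) ^ 2ᵏ) ≤ Re Tr (P ^ 2ᵏ * Q ^ 2ᵏ)`; applied to
`P = exp (A / 2ᵏ)` and `Q = exp (B / 2ᵏ)` the right-hand side is `Re Tr (exp A * exp B)` for every
`k`, and the inequality passes to the limit. Both traces are real, since `exp (A + B)` is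
Hermitian and `Tr (P * Q) = Tr ((P * Q)ᴴ)`.

The power-trace inequality follows from `2 Re Tr (X * Y) ≤ Tr (X * Xᴴ) + Tr (Y * Yᴴ)`, i.e.
`Tr ((Xᴴ - Y)ᴴ * (Xᴴ - Y)) ≥ 0`, by a simultaneous induction with
`Re Tr (X ^ 2ᵏ⁺¹) ≤ Re Tr ((X * Xᴴ) ^ 2ᵏ)`.
-/

open scoped ComplexOrder Matrix
open NormedSpace Filter Topology Asymptotics

theorem mul_self_pow_two_pow {M : Type*} [Monoid M] (x : M) (k : ℕ) :
    (x * x) ^ 2 ^ k = x ^ 2 ^ (k + 1) := by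
  rw [← sq, ← pow_mul, pow_succ']

namespace Matrix

variable {n R 𝕜 : Type*} [Fintype n]

theorem trace_mul_pow_comm [DecidableEq n] [CommSemiring R] (a b : Matrix n n R) (k : ℕ) :
    ((a * b) ^ k).trace = ((b * a) ^ k).trace := by
  cases k with
  | zero => rfl
  | succ k =>
    rw [pow_succ, ← Matrix.mul_assoc, trace_mul_comm, mul_pow_mul, ← Matrix.mul_assoc, ← pow_succ']

theorem IsHermitian.im_trace {A : Matrix n n ℂ} (hA : A.IsHermitian) : A.trace.im = 0 :=
  Complex.conj_eq_iff_im.mp (by rw [← Complex.star_def, ← trace_conjTranspose, hA.eq])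

theorem IsHermitian.im_trace_mul {P Q : Matrix n n ℂ} (hP : P.IsHermitian) (hQ : Q.IsHermitian) :
    (P * Q).trace.im = 0 :=
  Complex.conj_eq_iff_im.mp (by
    rw [← Complex.star_def, ← trace_conjTranspose, conjTranspose_mul, hP.eq, hQ.eq, trace_mul_comm])

variable [RCLike 𝕜]

open RCLike

theorem two_mul_re_trace_mul_le (X Y : Matrix n n 𝕜) :
    2 * re (X * Y).trace ≤ re (X * Xᴴ).trace + re (Y * Yᴴ).trace := by
  have h := (posSemidef_conjTranspose_mul_self (Xᴴ - Y)).trace_nonneg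
  have hYX : (Yᴴ * Xᴴ).trace = star (X * Y).trace := by
    rw [← conjTranspose_mul, trace_conjTranspose]
  rw [conjTranspose_sub, conjTranspose_conjTranspose, sub_mul, mul_sub, mul_sub, trace_sub,
    trace_sub, trace_sub, hYX, trace_mul_comm Yᴴ Y] at h
  have h_re := (RCLike.nonneg_iff.mp h).1
  simp only [map_sub, RCLike.star_def, RCLike.conj_re] at h_re
  linarith

theorem re_trace_mul_le_of_isHermitian {H K : Matrix n n 𝕜} (hH : H.IsHermitian)
    (hK : K.IsHermitian) (h : (H * H).trace = (K * K).trace) :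
    re (H * K).trace ≤ re (H * H).trace := by
  have := two_mul_re_trace_mul_le H K
  rw [hH.eq, hK.eq, ← h] at this
  linarith

variable [DecidableEq n]

theorem re_trace_sq_le (X : Matrix n n 𝕜) : re (X ^ 2).trace ≤ re (X * Xᴴ).trace := by
  rw [sq]
  linarith [two_mul_re_trace_mul_le X X]

theorem re_trace_pow_two_pow_le_and_re_trace_mul_pow_two_pow_le (k : ℕ) :
    (∀ X : Matrix n n 𝕜, re (X ^ 2 ^ (k + 1)).trace ≤ re ((X * Xᴴ) ^ 2 ^ k).trace) ∧
      ∀ P Q : Matrix n n 𝕜, P.IsHermitian → Q.IsHermitian →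
        re ((P * Q) ^ 2 ^ k).trace ≤ re (P ^ 2 ^ k * Q ^ 2 ^ k).trace := by
  induction k with
  | zero => exact ⟨fun X => by simpa using re_trace_sq_le X, fun P Q _ _ => by simp⟩
  | succ k ih =>
    obtain ⟨hpow, hmul⟩ := ih
    refine ⟨fun X => ?_, fun P Q hP hQ => ?_⟩
    · have hXXH := isHermitian_mul_conjTranspose_self X
      have hXHX := isHermitian_conjTranspose_mul_self X
      calc re (X ^ 2 ^ (k + 1 + 1)).trace
          = re ((X * X) ^ 2 ^ (k + 1)).trace := by rw [mul_self_pow_two_pow]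
        _ ≤ re (((X * X) * (X * X)ᴴ) ^ 2 ^ k).trace := hpow _
        _ = re (((X * Xᴴ) * (Xᴴ * X)) ^ 2 ^ k).trace := by
          rw [conjTranspose_mul, show X * X * (Xᴴ * Xᴴ) = X * (X * Xᴴ * Xᴴ) by noncomm_ring,
            trace_mul_pow_comm]
          noncomm_ring
        _ ≤ re ((X * Xᴴ) ^ 2 ^ k * (Xᴴ * X) ^ 2 ^ k).trace := hmul _ _ hXXH hXHX
        _ ≤ re ((X * Xᴴ) ^ 2 ^ k * (X * Xᴴ) ^ 2 ^ k).trace :=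
          re_trace_mul_le_of_isHermitian (hXXH.pow _) (hXHX.pow _)
            (by rw [← pow_add, ← pow_add, trace_mul_pow_comm])
        _ = re ((X * Xᴴ) ^ 2 ^ (k + 1)).trace := by rw [← pow_add, ← two_mul, pow_succ']
    · calc re ((P * Q) ^ 2 ^ (k + 1)).trace
          ≤ re (((P * Q) * (P * Q)ᴴ) ^ 2 ^ k).trace := hpow _
        _ = re (((P * P) * (Q * Q)) ^ 2 ^ k).trace := by
          rw [conjTranspose_mul, hP.eq, hQ.eq, show P * Q * (Q * P) = P * Q * Q * P by noncomm_ring,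
            trace_mul_pow_comm]
          noncomm_ring
        _ ≤ re ((P * P) ^ 2 ^ k * (Q * Q) ^ 2 ^ k).trace :=
          hmul _ _ (sq P ▸ hP.pow 2) (sq Q ▸ hQ.pow 2)
        _ = re (P ^ 2 ^ (k + 1) * Q ^ 2 ^ (k + 1)).trace := by
          rw [mul_self_pow_two_pow, mul_self_pow_two_pow]

theorem re_trace_mul_pow_two_pow_le {P Q : Matrix n n 𝕜} (hP : P.IsHermitian)
    (hQ : Q.IsHermitian) (k : ℕ) :
    re ((P * Q) ^ 2 ^ k).trace ≤ re (P ^ 2 ^ k * Q ^ 2 ^ k).trace :=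
  (re_trace_pow_two_pow_le_and_re_trace_mul_pow_two_pow_le k).2 P Q hP hQ

end Matrix

section LieProduct

variable {𝔸 : Type*} [NormedRing 𝔸] [NormedAlgebra ℝ 𝔸]

theorem norm_exp_le_exp_norm [NormOneClass 𝔸] (x : 𝔸) : ‖exp x‖ ≤ Real.exp ‖x‖ := by
  rw [exp_eq_tsum ℝ, Real.exp_eq_exp_ℝ, exp_eq_tsum_div]
  refine (norm_tsum_le_tsum_norm (norm_expSeries_summable' x)).trans <|
    Summable.tsum_le_tsum (fun k => ?_) (norm_expSeries_summable' x)
      (Real.summable_pow_div_factorial _)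
  rw [norm_smul, div_eq_inv_mul, norm_inv, Real.norm_natCast]
  gcongr
  exact norm_pow_le x k

theorem norm_pow_succ_sub_pow_succ_le {R : Type*} [SeminormedRing R] {u v : R} {K : ℝ}
    (hu : ‖u‖ ≤ K) (hv : ‖v‖ ≤ K) (m : ℕ) :
    ‖u ^ (m + 1) - v ^ (m + 1)‖ ≤ (m + 1) * K ^ m * ‖u - v‖ := by
  have hK : 0 ≤ K := (norm_nonneg u).trans hu
  induction m with
  | zero => simp
  | succ m ih =>
    have hvm : ‖v ^ (m + 1)‖ ≤ K ^ (m + 1) :=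
      (norm_pow_le' v m.succ_pos).trans (pow_le_pow_left₀ (norm_nonneg v) hv _)
    calc ‖u ^ (m + 1 + 1) - v ^ (m + 1 + 1)‖
        = ‖u * (u ^ (m + 1) - v ^ (m + 1)) + (u - v) * v ^ (m + 1)‖ := by
          rw [mul_sub, sub_mul, ← pow_succ', ← pow_succ']
          abel_nf
      _ ≤ K * ((m + 1) * K ^ m * ‖u - v‖) + ‖u - v‖ * K ^ (m + 1) := by
          refine (norm_add_le _ _).trans (add_le_add ?_ ?_) <;>
            exact (norm_mul_le _ _).trans (by gcongr)
      _ = (↑(m + 1) + 1) * K ^ (m + 1) * ‖u - v‖ := by push_cast; ring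

variable [CompleteSpace 𝔸]

theorem isLittleO_exp_smul_mul_exp_smul_sub_exp_smul_add (x y : 𝔸) :
    (fun t : ℝ => exp (t • x) * exp (t • y) - exp (t • (x + y))) =o[𝓝 0] fun t => t := by
  have h := ((hasDerivAt_exp_smul_const x (0 : ℝ)).mul (hasDerivAt_exp_smul_const y 0)).sub
    (hasDerivAt_exp_smul_const (x + y) 0)
  simpa [hasDerivAt_iff_isLittleO] using h

theorem norm_exp_smul_mul_exp_smul_pow_sub_exp_add_le [NormOneClass 𝔸] (x y : 𝔸) {m : ℕ}
    (hm : m ≠ 0) :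
    ‖(exp ((m : ℝ)⁻¹ • x) * exp ((m : ℝ)⁻¹ • y)) ^ m - exp (x + y)‖ ≤
      Real.exp (‖x‖ + ‖y‖) *
        (m * ‖exp ((m : ℝ)⁻¹ • x) * exp ((m : ℝ)⁻¹ • y) - exp ((m : ℝ)⁻¹ • (x + y))‖) := by
  -- `exp_nsmul` is stated for normed `ℚ`-algebras
  let _ : NormedAlgebra ℚ 𝔸 := NormedAlgebra.restrictScalars ℚ ℝ 𝔸
  obtain ⟨j, rfl⟩ := Nat.exists_eq_succ_of_ne_zero hm
  set L := ‖x‖ + ‖y‖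
  set r : ℝ := ((j + 1 : ℕ) : ℝ)⁻¹
  have hr0 : 0 ≤ r := by positivity
  have hrj : ((j + 1 : ℕ) : ℝ) * r = 1 := mul_inv_cancel₀ (by positivity)
  have hexp : ∀ z : 𝔸, ‖exp (r • z)‖ ≤ Real.exp (r * ‖z‖) := fun z => by
    simpa [norm_smul, Real.norm_of_nonneg hr0] using norm_exp_le_exp_norm (r • z)
  have hu : ‖exp (r • x) * exp (r • y)‖ ≤ Real.exp (r * L) := by
    rw [mul_add, Real.exp_add]
    exact (norm_mul_le _ _).trans (mul_le_mul (hexp x) (hexp y) (norm_nonneg _) (by positivity))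
  have hv : ‖exp (r • (x + y))‖ ≤ Real.exp (r * L) :=
    (hexp _).trans (Real.exp_le_exp.2 (mul_le_mul_of_nonneg_left (norm_add_le _ _) hr0))
  have hpow : exp (r • (x + y)) ^ (j + 1) = exp (x + y) := by
    rw [← exp_nsmul, ← Nat.cast_smul_eq_nsmul ℝ, smul_smul, hrj, one_smul]
  have hK : Real.exp (r * L) ^ j ≤ Real.exp L := by
    have hjr : (j : ℝ) * r ≤ 1 := by push_cast at hrj; linarith
    rw [← Real.exp_nat_mul, Real.exp_le_exp, ← mul_assoc]
    exact mul_le_of_le_one_left (by positivity) hjr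
  rw [← hpow]
  refine (norm_pow_succ_sub_pow_succ_le hu hv j).trans ?_
  push_cast
  nlinarith [mul_le_mul_of_nonneg_left hK (by positivity : (0 : ℝ) ≤
    (j + 1) * ‖exp (r • x) * exp (r • y) - exp (r • (x + y))‖)]

theorem tendsto_exp_smul_mul_exp_smul_pow [NormOneClass 𝔸] (x y : 𝔸) :
    Tendsto (fun m : ℕ => (exp ((m : ℝ)⁻¹ • x) * exp ((m : ℝ)⁻¹ • y)) ^ m) atTop
      (𝓝 (exp (x + y))) := by
  have hf : Tendsto (fun m : ℕ => ‖exp ((m : ℝ)⁻¹ • x) * exp ((m : ℝ)⁻¹ • y) -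
      exp ((m : ℝ)⁻¹ • (x + y))‖ / (m : ℝ)⁻¹) atTop (𝓝 0) :=
    ((isLittleO_exp_smul_mul_exp_smul_sub_exp_smul_add x y).comp_tendsto
      (tendsto_inv_atTop_nhds_zero_nat (𝕜 := ℝ))).norm_left.tendsto_div_nhds_zero
  simp_rw [div_inv_eq_mul, mul_comm _ (_ : ℝ)] at hf
  rw [tendsto_iff_norm_sub_tendsto_zero]
  refine squeeze_zero' (Eventually.of_forall fun _ => norm_nonneg _) ?_
    (by simpa only [mul_zero] using hf.const_mul (Real.exp (‖x‖ + ‖y‖)))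
  filter_upwards [eventually_ne_atTop 0] with m hm
  exact norm_exp_smul_mul_exp_smul_pow_sub_exp_add_le x y hm

end LieProduct

/-- (Golden–Thompson inequality.) For `n×n` Hermitian matrices `A, B`,
`Tr(e^{A+B}) ≤ Tr(e^A e^B)`. -/
theorem stmt16 (n : ℕ) (hn : 1 ≤ n) (A B : Matrix (Fin n) (Fin n) ℂ)
    (hA : A.IsHermitian) (hB : B.IsHermitian) :
    (NormedSpace.exp (A + B)).trace ≤
      (NormedSpace.exp A * NormedSpace.exp B).trace := by
  have : Nonempty (Fin n) := Fin.pos_iff_nonempty.mp hn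
  let _ : NormedRing (Matrix (Fin n) (Fin n) ℂ) := Matrix.linftyOpNormedRing
  let _ : NormedAlgebra ℝ (Matrix (Fin n) (Fin n) ℂ) := Matrix.linftyOpNormedAlgebra
  let c : ℕ → ℝ := fun k => ((2 ^ k : ℕ) : ℝ)⁻¹
  have hpow : ∀ (k : ℕ) (H : Matrix (Fin n) (Fin n) ℂ), exp (c k • H) ^ 2 ^ k = exp H := by
    intro k H
    rw [← Matrix.exp_nsmul, ← Nat.cast_smul_eq_nsmul ℝ, smul_inv_smul₀ (by positivity)]
  have hbound : ∀ k : ℕ, ((exp (c k • A) * exp (c k • B)) ^ 2 ^ k).trace.re ≤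
      (exp A * exp B).trace.re := fun k => by
    simpa [hpow] using Matrix.re_trace_mul_pow_two_pow_le
      (hA.smul (IsSelfAdjoint.all (c k))).exp (hB.smul (IsSelfAdjoint.all (c k))).exp k
  have hlim : Tendsto (fun k : ℕ => ((exp (c k • A) * exp (c k • B)) ^ 2 ^ k).trace.re) atTop
      (𝓝 (exp (A + B)).trace.re) :=
    ((Complex.continuous_re.comp (continuous_id.matrix_trace)).tendsto _).comp
      ((tendsto_exp_smul_mul_exp_smul_pow A B).comp
        (tendsto_pow_atTop_atTop_of_one_lt (α := ℕ) one_lt_two))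
  refine Complex.le_def.mpr ⟨le_of_tendsto' hlim hbound, ?_⟩
  rw [(hA.add hB).exp.im_trace, hA.exp.im_trace_mul hB.exp]
end
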